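/- Let G be a finite group and Γ ⊆ G a union of nontrivial conjugacy classes. Then the central extension 1 → R/R_Γ → G_Γ → G → 1 is exact, i.e., R_Γ ⊆ R, the kernel of the boundary map G_Γ → G equals R/R_Γ, and this kernel is contained in the center of G_Γ. -/

import Mathlib

variable (G : Type*) [Group G]

/-- The canonical surjection from the free group `F` on the set `G` to `G`. -/
def tautProj : FreeGroup G →* G := FreeGroup.lift id

/-- `R = ker (F → G)`. -/
def Rrel : Subgroup (FreeGroup G) := (tautProj G).ker

/-- The commutator subgroup `[F, R]`. -/
def FRcomm : Subgroup (FreeGroup G) := ⁅(⊤ : Subgroup (FreeGroup G)), Rrel G⁆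

/-- The tautological lifts `â b̂ ĉ⁻¹ b̂⁻¹` of the conjugation relations, `a ∈ Γ`,
`c = b⁻¹ a b`. -/
def conjRels (Γ : Set G) : Set (FreeGroup G) :=
  {x | ∃ a ∈ Γ, ∃ b : G, x = FreeGroup.of a * FreeGroup.of b *
    (FreeGroup.of (b⁻¹ * a * b))⁻¹ * (FreeGroup.of b)⁻¹}

/-- `R_Γ`: the normal subgroup generated by `[F,R]` and the lifted conjugation relations. -/
def RGamma (Γ : Set G) : Subgroup (FreeGroup G) :=
  Subgroup.normalClosure ((FRcomm G : Set (FreeGroup G)) ∪ conjRels G Γ)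

instance (Γ : Set G) : (RGamma G Γ).Normal := Subgroup.normalClosure_normal

/-! Every homomorphism `α` as in the theorem satisfies `α ∘ mk = tautProj`, since both agree on the
free generators; hence `ker α` is the image of `R`. That image is central because
`[R, F] = [F, R] ⊆ R_Γ`. -/

open Subgroup

theorem Subgroup.map_mk'_le_center_of_commutator_le {F : Type*} [Group F] (N K : Subgroup F)
    [N.Normal] (h : ⁅K, (⊤ : Subgroup F)⁆ ≤ N) : K.map (QuotientGroup.mk' N) ≤ center (F ⧸ N) := by
  have hbot : ⁅K.map (QuotientGroup.mk' N), (⊤ : Subgroup (F ⧸ N))⁆ = ⊥ := by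
    rw [← map_top_of_surjective _ (QuotientGroup.mk'_surjective N), ← map_commutator,
      map_eq_bot_iff, QuotientGroup.ker_mk']
    exact h
  rw [commutator_eq_bot_iff_le_centralizer, coe_top, centralizer_univ] at hbot
  exact hbot

theorem MonoidHom.ker_eq_map_ker_comp {A B C : Type*} [Group A] [Group B] [Group C]
    (f : B →* C) (π : A →* B) (hπ : Function.Surjective π) :
    f.ker = (f.comp π).ker.map π := by
  rw [← comap_ker, map_comap_eq_self_of_surjective hπ]

variable {G}

instance Rrel_normal : (Rrel G).Normal :=
  MonoidHom.normal_ker _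

theorem conjRels_subset_Rrel (Γ : Set G) : conjRels G Γ ⊆ Rrel G := by
  rintro _ ⟨a, -, b, rfl⟩
  simp only [SetLike.mem_coe, Rrel, MonoidHom.mem_ker, tautProj, map_mul, map_inv,
    FreeGroup.lift_apply_of, id_eq]
  group

theorem FRcomm_le_Rrel : FRcomm G ≤ Rrel G :=
  commutator_le_right _ _

theorem RGamma_le_Rrel (Γ : Set G) : RGamma G Γ ≤ Rrel G :=
  normalClosure_le_normal (Set.union_subset FRcomm_le_Rrel (conjRels_subset_Rrel Γ))

theorem FRcomm_le_RGamma (Γ : Set G) : FRcomm G ≤ RGamma G Γ :=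
  fun _ hx => subset_normalClosure (Set.mem_union_left _ hx)

theorem comp_mk'_eq_tautProj {N : Subgroup (FreeGroup G)} [N.Normal] (α : FreeGroup G ⧸ N →* G)
    (hα : ∀ g : G, α (QuotientGroup.mk (FreeGroup.of g)) = g) :
    α.comp (QuotientGroup.mk' N) = tautProj G :=
  FreeGroup.ext_hom _ _ fun g => by simp [hα g, tautProj]

theorem tautological_central_extension (Γ : Set G)
    (α : (FreeGroup G ⧸ RGamma G Γ) →* G)
    (hα : ∀ g : G, α (QuotientGroup.mk (FreeGroup.of g)) = g) :
    RGamma G Γ ≤ Rrel G ∧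
    α.ker = Subgroup.map (QuotientGroup.mk' (RGamma G Γ)) (Rrel G) ∧
    α.ker ≤ Subgroup.center (FreeGroup G ⧸ RGamma G Γ) := by
  have hker : α.ker = (Rrel G).map (QuotientGroup.mk' (RGamma G Γ)) := by
    rw [α.ker_eq_map_ker_comp _ (QuotientGroup.mk'_surjective _), comp_mk'_eq_tautProj α hα]
    rfl
  refine ⟨RGamma_le_Rrel Γ, hker, hker ▸ ?_⟩
  apply map_mk'_le_center_of_commutator_le
  rw [commutator_comm]
  exact FRcomm_le_RGamma Γ
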